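/- arXiv:1605.07121 — 2 statements merged into one kernel-verified Lean document; each statement's English description precedes it below -/
import Mathlib

section
/- Receding horizon decrease condition: suppose the running cost is nonnegative, there is no terminal cost, and for all states e in a set S one has J*_∞(e) − J*_{T−Δ}(e) ≤ (1/2) J*_Δ(e). Then, letting e* be the state reached at time Δ along an optimal horizon-T trajectory from e, one has J*_{T−Δ}(e*) − J*_{T−Δ}(e) ≤ −(1/2) J*_Δ(e), provided e* ∈ S and J*_{T₁} ≤ J*_{T₂} for T₁ ≤ T₂. -/
/-- Receding horizon decrease condition (abstract form).  `Jinf`, `JT`, `JTmΔ`,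
`JΔ` denote the optimal costs `J*_∞`, `J*_T`, `J*_{T−Δ}`, `J*_Δ` (nonnegative
running cost, zero terminal cost).  `ℓ` is the running cost accumulated on
`[0,Δ]` along an optimal horizon-`T` trajectory from `e`, which reaches `e*` at
time `Δ`; the principle of optimality gives `JT e = ℓ + JTmΔ e*`, and by
optimality `JΔ e ≤ ℓ`; monotonicity of the value in the horizon gives
`JT e ≤ Jinf e`.  If `Jinf − JTmΔ ≤ ½ JΔ` on a set `S` containing `e` and `e*`,
then `JTmΔ e* − JTmΔ e ≤ −½ JΔ e`. -/
theorem stmt_4 {E : Type*} (S : Set E)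
    (Jinf JT JTmΔ JΔ : E → ℝ) (e estar : E) (ℓ : ℝ)
    (hPoO : JT e = ℓ + JTmΔ estar)
    (hℓ : JΔ e ≤ ℓ)
    (hmono : JT e ≤ Jinf e)
    (hS : ∀ x ∈ S, Jinf x - JTmΔ x ≤ (1 / 2) * JΔ x)
    (he : e ∈ S) (hestar : estar ∈ S) :
    JTmΔ estar - JTmΔ e ≤ -(1 / 2) * JΔ e := by
  have h1 := hS e he
  linarith
end

section
/- Positive invariance of the nonnegative orthant for the HIV model: if (x₁, x₂, x₃) : [0,T] → ℝ³ is a C¹ solution of ẋ₁ = s − d x₁ − β x₁ x₃, ẋ₂ = β x₁ x₃ − μ₁ x₂, ẋ₃ = k x₂ − μ₂ x₃ with s, d, β, μ₁, k, μ₂ > 0 and x₁(0), x₂(0), x₃(0) ≥ 0, then x₁(t), x₂(t), x₃(t) ≥ 0 for all t ∈ [0,T]. -/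
/-!
Shift every component by the same barrier `ε * exp (L * t)`. If, on the face where a component
equals `-a` and the others are `≥ -a`, the vector field exceeds `-L * a`, then a
shifted component that touches zero has positive derivative there, so by continuous induction
the shifted orthant is never left. Letting `ε → 0` gives the result. For the HIV model the margin
`L` comes from `s > 0`, `β, k ≥ 0` and bounds on `x₁`, `x₃` over the compact time interval.
-/

open Set Filter Topology

theorem HasDerivAt.eventually_pos_nhdsGT {f : ℝ → ℝ} {f' t : ℝ} (hf : HasDerivAt f f' t)
    (h0 : f t = 0) (hf' : 0 < f') : ∀ᶠ u in 𝓝[>] t, 0 < f u := by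
  have hslope := (hasDerivWithinAt_iff_tendsto_slope' (lt_irrefl t)).mp hf.hasDerivWithinAt
  filter_upwards [hslope.eventually (lt_mem_nhds hf'), self_mem_nhdsWithin] with u hu htu
  rw [slope_def_field, h0, sub_zero] at hu
  exact (div_pos_iff_of_pos_right (sub_pos.mpr htu)).mp hu

section Orthant

variable {ι : Type*} [Finite ι] {x F : ι → ℝ → ℝ} {T L : ℝ}

theorem orthant_nonneg_add_exp_of_deriv_gt
    (hx : ∀ i, ∀ t ∈ Icc 0 T, HasDerivAt (x i) (F i t) t) (h0 : ∀ i, 0 ≤ x i 0)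
    (hF : ∀ t ∈ Ico 0 T, ∀ a > 0, (∀ j, -a ≤ x j t) → ∀ i, x i t = -a → -(L * a) < F i t)
    {ε : ℝ} (hε : 0 < ε) : ∀ t ∈ Icc 0 T, ∀ i, 0 ≤ x i t + ε * Real.exp (L * t) := by
  set g : ℝ → ℝ := fun t => ε * Real.exp (L * t)
  have hg : ∀ t, HasDerivAt g (L * g t) t := fun t =>
    (((hasDerivAt_id t).const_mul L).exp.const_mul ε).congr_deriv (by simp only [g, id]; ring)
  have hcont : ContinuousOn (fun t i => x i t + g t) (Icc 0 T) :=
    continuousOn_pi.mpr fun i t ht =>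
      ((hx i t ht).continuousAt.add (hg t).continuousAt).continuousWithinAt
  refine fun t ht => IsClosed.Icc_subset_of_forall_mem_nhdsWithin
    (s := {t | ∀ i, 0 ≤ x i t + g t}) ?_ ?_ ?_ ht
  · rw [inter_comm]
    exact hcont.preimage_isClosed_of_isClosed isClosed_Icc (isClosed_Ici (a := 0))
  · intro i
    simpa [g] using add_nonneg (h0 i) hε.le
  · rintro t ⟨hmem, ht⟩
    have hgt : 0 < g t := by positivity
    have hxt := fun i => hx i t (Ico_subset_Icc_self ht)
    have hpos : ∀ i, ∀ᶠ u in 𝓝[>] t, 0 < x i u + g u := by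
      intro i
      rcases (hmem i).lt_or_eq with hlt | hzero
      · exact (((hxt i).continuousAt.add (hg t).continuousAt).eventually
          (lt_mem_nhds hlt)).filter_mono nhdsWithin_le_nhds
      · refine ((hxt i).add (hg t)).eventually_pos_nhdsGT hzero.symm ?_
        have := hF t ht (g t) hgt (fun j => by linarith [hmem j]) i (by linarith)
        linarith
    filter_upwards [eventually_all.mpr hpos] with u hu i using (hu i).le

theorem orthant_nonneg_of_deriv_gt
    (hx : ∀ i, ∀ t ∈ Icc 0 T, HasDerivAt (x i) (F i t) t) (h0 : ∀ i, 0 ≤ x i 0)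
    (hF : ∀ t ∈ Ico 0 T, ∀ a > 0, (∀ j, -a ≤ x j t) → ∀ i, x i t = -a → -(L * a) < F i t) :
    ∀ t ∈ Icc 0 T, ∀ i, 0 ≤ x i t := by
  intro t ht i
  refine le_of_forall_pos_le_add fun δ hδ => ?_
  have hexp := Real.exp_pos (L * t)
  have := orthant_nonneg_add_exp_of_deriv_gt hx h0 hF (div_pos hδ hexp) t ht i
  rwa [div_mul_cancel₀ _ hexp.ne'] at this

end Orthant

theorem neg_mul_abs_add_abs_le_mul {a x y : ℝ} (ha : 0 ≤ a) (hx : -a ≤ x) (hy : -a ≤ y) :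
    -(a * (|x| + |y|)) ≤ x * y := by
  rcases le_total 0 x with hx0 | hx0 <;> rcases le_total 0 y with hy0 | hy0
  · nlinarith [abs_of_nonneg hx0, abs_of_nonneg hy0]
  · nlinarith [abs_of_nonneg hx0, abs_of_nonpos hy0]
  · nlinarith [abs_of_nonpos hx0, abs_of_nonneg hy0]
  · nlinarith [abs_of_nonpos hx0, abs_of_nonpos hy0]

def hivField (s d β μ₁ k μ₂ : ℝ) (y : Fin 3 → ℝ) : Fin 3 → ℝ :=
  ![s - d * y 0 - β * y 0 * y 2, β * y 0 * y 2 - μ₁ * y 1, k * y 1 - μ₂ * y 2]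

theorem neg_mul_lt_hivField {s d β μ₁ k μ₂ a M₁ M₃ : ℝ} (hs : 0 < s) (hβ : 0 ≤ β) (hk : 0 ≤ k)
    (ha : 0 < a) {y : Fin 3 → ℝ} (hy : ∀ j, -a ≤ y j) (hM₁ : |y 0| ≤ M₁) (hM₃ : |y 2| ≤ M₃)
    (i : Fin 3) (hi : y i = -a) :
    -((|d| + |μ₁| + |μ₂| + β * (M₁ + M₃) + k + 1) * a) < hivField s d β μ₁ k μ₂ y i := by
  have hM₁0 : 0 ≤ M₁ := (abs_nonneg _).trans hM₁
  have hM₃0 : 0 ≤ M₃ := (abs_nonneg _).trans hM₃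
  have hda := mul_le_mul_of_nonneg_right (neg_abs_le d) ha.le
  have hμ₁a := mul_le_mul_of_nonneg_right (neg_abs_le μ₁) ha.le
  have hμ₂a := mul_le_mul_of_nonneg_right (neg_abs_le μ₂) ha.le
  fin_cases i <;>
    simp only [hivField, Fin.zero_eta, Fin.mk_one, Fin.reduceFinMk, Matrix.cons_val] at hi ⊢ <;>
    rw [hi]
  · nlinarith [mul_nonneg (mul_nonneg hβ ha.le) (neg_le_iff_add_nonneg.mp (abs_le.mp hM₃).1),
      mul_nonneg (by positivity : 0 ≤ |μ₁| + |μ₂| + β * M₁ + k + 1) ha.le]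
  · nlinarith [mul_le_mul_of_nonneg_left (neg_mul_abs_add_abs_le_mul ha.le (hy 0) (hy 2)) hβ,
      mul_nonneg (mul_nonneg hβ ha.le) (by linarith : 0 ≤ M₁ + M₃ - (|y 0| + |y 2|)),
      mul_nonneg (by positivity : 0 ≤ |d| + |μ₂| + k) ha.le]
  · nlinarith [mul_le_mul_of_nonneg_left (hy 1) hk,
      mul_nonneg (by positivity : 0 ≤ |d| + |μ₁| + β * (M₁ + M₃)) ha.le]

theorem stmt_8_general (s d β μ₁ k μ₂ T : ℝ)
    (hs : 0 < s) (hβ : 0 < β) (hk : 0 < k)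
    (x₁ x₂ x₃ : ℝ → ℝ)
    (hx₁ : ∀ t ∈ Icc (0:ℝ) T,
      HasDerivAt x₁ (s - d * x₁ t - β * x₁ t * x₃ t) t)
    (hx₂ : ∀ t ∈ Icc (0:ℝ) T,
      HasDerivAt x₂ (β * x₁ t * x₃ t - μ₁ * x₂ t) t)
    (hx₃ : ∀ t ∈ Icc (0:ℝ) T,
      HasDerivAt x₃ (k * x₂ t - μ₂ * x₃ t) t)
    (h₁ : 0 ≤ x₁ 0) (h₂ : 0 ≤ x₂ 0) (h₃ : 0 ≤ x₃ 0) :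
    ∀ t ∈ Icc (0:ℝ) T, 0 ≤ x₁ t ∧ 0 ≤ x₂ t ∧ 0 ≤ x₃ t := by
  obtain ⟨M₁, hM₁⟩ := isCompact_Icc.exists_bound_of_continuousOn
    fun t ht => (hx₁ t ht).continuousAt.continuousWithinAt
  obtain ⟨M₃, hM₃⟩ := isCompact_Icc.exists_bound_of_continuousOn
    fun t ht => (hx₃ t ht).continuousAt.continuousWithinAt
  have key := orthant_nonneg_of_deriv_gt (x := ![x₁, x₂, x₃])
    (F := fun i t => hivField s d β μ₁ k μ₂ (fun j => ![x₁, x₂, x₃] j t) i)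
    (by intro i; fin_cases i; exacts [hx₁, hx₂, hx₃])
    (by intro i; fin_cases i; exacts [h₁, h₂, h₃])
    (fun t ht a ha hy => neg_mul_lt_hivField hs hβ.le hk.le ha hy
      (hM₁ t (Ico_subset_Icc_self ht)) (hM₃ t (Ico_subset_Icc_self ht)))
  exact fun t ht => ⟨key t ht 0, key t ht 1, key t ht 2⟩

/-- Positive invariance of the nonnegative orthant for the HIV model: a C¹
solution on `[0,T]` with nonnegative initial data stays nonnegative. -/
theorem stmt_8 (s d β μ₁ k μ₂ T : ℝ)
    (hs : 0 < s) (hd : 0 < d) (hβ : 0 < β) (hμ₁ : 0 < μ₁) (hk : 0 < k)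
    (hμ₂ : 0 < μ₂)
    (x₁ x₂ x₃ : ℝ → ℝ)
    (hx₁ : ∀ t ∈ Icc (0:ℝ) T,
      HasDerivAt x₁ (s - d * x₁ t - β * x₁ t * x₃ t) t)
    (hx₂ : ∀ t ∈ Icc (0:ℝ) T,
      HasDerivAt x₂ (β * x₁ t * x₃ t - μ₁ * x₂ t) t)
    (hx₃ : ∀ t ∈ Icc (0:ℝ) T,
      HasDerivAt x₃ (k * x₂ t - μ₂ * x₃ t) t)
    (h₁ : 0 ≤ x₁ 0) (h₂ : 0 ≤ x₂ 0) (h₃ : 0 ≤ x₃ 0) :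
    ∀ t ∈ Icc (0:ℝ) T, 0 ≤ x₁ t ∧ 0 ≤ x₂ t ∧ 0 ≤ x₃ t :=
  stmt_8_general s d β μ₁ k μ₂ T hs hβ hk x₁ x₂ x₃ hx₁ hx₂ hx₃ h₁ h₂ h₃
end
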